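/- arXiv:2412.11742 — 3 statements merged into one kernel-verified Lean document; each statement's English description precedes it below -/
import Mathlib

section
/- Let Y : [t,T] → ℝ^{N×N} be a continuous adapted bounded symmetric-matrix-valued process satisfying, for matrices U_T ≥ 0, and adapted bounded processes A(s), H^{xx}(s) ≥ 0, H^{pp}(s) ≤ 0 (in the semidefinite order), Y(s) = E_s[ U_T + ∫_s^T ( H^{xx}(r) + A(r)Y(r) + Y(r)A(r)ᵀ + Y(r)H^{pp}(r)Y(r) ) dr ]. Then Y(s) ≥ 0 (positive semidefinite) for all s ∈ [t,T], almost surely. -/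
/-!
Let `m(s)` be the least eigenvalue of `Y(s)`, the infimum of `vᵀ Y(s) v` over unit vectors; it is
continuous and `m(T) ≥ 0`. For a unit eigenvector `v` of `Y(σ)` with eigenvalue `λ = m(σ)`, the
Riccati integrand has quadratic form `vᵀ Hxx v + 2λ vᵀ A v + λ² vᵀ Hpp v ≥ -C |λ|`, so by the
fundamental theorem of calculus the right Dini derivative of `m` at `σ` is at most `C |m(σ)|`.
Hence a value `m(s) < 0` would keep `m` below the negative barrier `m(s) e^{-(C+1)(r-s)}` up to
`r = T`, contradicting `m(T) ≥ 0`.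
-/

open Set Filter Topology Matrix

section

variable {n : Type*} [Fintype n]

variable (n) in
def unitSphere : Set (n → ℝ) := {v | v ⬝ᵥ v = 1}

lemma abs_le_one_of_mem_unitSphere {v : n → ℝ} (hv : v ∈ unitSphere n) (i : n) : |v i| ≤ 1 := by
  have : v i * v i ≤ v ⬝ᵥ v :=
    Finset.single_le_sum (f := fun k => v k * v k) (fun k _ => mul_self_nonneg (v k))
      (Finset.mem_univ i)
  rw [hv] at this
  exact abs_le_one_iff_mul_self_le_one.mpr this

lemma isCompact_unitSphere : IsCompact (unitSphere n) := by
  refine Metric.isCompact_of_isClosed_isBounded (isClosed_eq (by fun_prop) continuous_const) ?_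
  refine (Metric.isBounded_closedBall (x := 0) (r := 1)).subset fun v hv => ?_
  rw [mem_closedBall_zero_iff, pi_norm_le_iff_of_nonneg zero_le_one]
  exact fun i => (Real.norm_eq_abs _).trans_le (abs_le_one_of_mem_unitSphere hv i)

lemma inv_sqrt_smul_mem_unitSphere {x : n → ℝ} (hx : x ≠ 0) :
    (√(x ⬝ᵥ x))⁻¹ • x ∈ unitSphere n := by
  have hpos : 0 < x ⬝ᵥ x := by simpa using dotProduct_star_self_pos_iff.mpr hx
  simp only [unitSphere, mem_ofPred_eq, dotProduct_smul, smul_dotProduct, smul_eq_mul]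
  rw [← mul_assoc, ← mul_inv, Real.mul_self_sqrt hpos.le, inv_mul_cancel₀ hpos.ne']

lemma abs_dotProduct_mulVec_le {B : Matrix n n ℝ} {v : n → ℝ} {M : ℝ} (hv : v ∈ unitSphere n)
    (hB : ∀ i j, |B i j| ≤ M) : |v ⬝ᵥ B *ᵥ v| ≤ Fintype.card n ^ 2 * M := by
  have hterm : ∀ i j, |v i * (B i j * v j)| ≤ M := fun i j => by
    rw [abs_mul, abs_mul]
    calc |v i| * (|B i j| * |v j|) ≤ 1 * (M * 1) := by
          gcongr
          · exact abs_le_one_of_mem_unitSphere hv i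
          · exact le_trans (abs_nonneg _) (hB i j)
          · exact hB i j
          · exact abs_le_one_of_mem_unitSphere hv j
      _ = M := by ring
  calc |v ⬝ᵥ B *ᵥ v| = |∑ i, ∑ j, v i * (B i j * v j)| := by
        simp only [dotProduct, mulVec, Finset.mul_sum]
    _ ≤ ∑ i, ∑ j, |v i * (B i j * v j)| :=
        (Finset.abs_sum_le_sum_abs _ _).trans
          (Finset.sum_le_sum fun i _ => Finset.abs_sum_le_sum_abs _ _)
    _ ≤ ∑ _i : n, ∑ _j : n, M :=
        Finset.sum_le_sum fun i _ => Finset.sum_le_sum fun j _ => hterm i j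
    _ = Fintype.card n ^ 2 * M := by simp [sq, mul_assoc]

noncomputable def rayleighInf (B : Matrix n n ℝ) : ℝ :=
  sInf ((fun v => v ⬝ᵥ B *ᵥ v) '' unitSphere n)

lemma rayleighInf_le (B : Matrix n n ℝ) {v : n → ℝ} (hv : v ∈ unitSphere n) :
    rayleighInf B ≤ v ⬝ᵥ B *ᵥ v :=
  csInf_le (isCompact_unitSphere.bddBelow_image (by fun_prop)) (mem_image_of_mem _ hv)

lemma rayleighInf_mul_dotProduct_self_le (B : Matrix n n ℝ) (x : n → ℝ) :
    rayleighInf B * (x ⬝ᵥ x) ≤ x ⬝ᵥ B *ᵥ x := by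
  rcases eq_or_ne x 0 with rfl | hx
  · simp
  have hpos : 0 < x ⬝ᵥ x := by simpa using dotProduct_star_self_pos_iff.mpr hx
  have h := rayleighInf_le B (inv_sqrt_smul_mem_unitSphere hx)
  simp only [dotProduct_smul, mulVec_smul, smul_dotProduct, smul_eq_mul, ← mul_assoc, ← mul_inv,
    Real.mul_self_sqrt hpos.le] at h
  rwa [le_inv_mul_iff₀ hpos, mul_comm] at h

lemma rayleighInf_nonneg {B : Matrix n n ℝ} (hB : B.PosSemidef) : 0 ≤ rayleighInf B :=
  Real.sInf_nonneg <| forall_mem_image.mpr fun v _ => by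
    simpa using hB.dotProduct_mulVec_nonneg v

lemma posSemidef_of_rayleighInf_nonneg {B : Matrix n n ℝ} (hB : B.IsSymm)
    (h : 0 ≤ rayleighInf B) : B.PosSemidef :=
  .of_dotProduct_mulVec_nonneg (isHermitian_iff_isSymm.mpr hB) fun x => by
    simpa using (mul_nonneg h (dotProduct_self_star_nonneg x)).trans
      (rayleighInf_mul_dotProduct_self_le B x)

lemma posSemidef_sub_rayleighInf_smul [DecidableEq n] {B : Matrix n n ℝ} (hB : B.IsSymm) :
    (B - rayleighInf B • 1).PosSemidef := by
  refine .of_dotProduct_mulVec_nonneg (isHermitian_iff_isSymm.mpr ?_) fun x => ?_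
  · simp [IsSymm, transpose_sub, hB.eq]
  · simpa [sub_mulVec, dotProduct_sub, smul_mulVec, mul_comm] using
      rayleighInf_mul_dotProduct_self_le B x

lemma exists_mulVec_eq_rayleighInf_smul [Nonempty n] {B : Matrix n n ℝ} (hB : B.IsSymm) :
    ∃ v ∈ unitSphere n, B *ᵥ v = rayleighInf B • v := by
  classical
  obtain ⟨v, hv, hmin⟩ : rayleighInf B ∈ (fun v => v ⬝ᵥ B *ᵥ v) '' unitSphere n := by
    refine (isCompact_unitSphere.image (by fun_prop)).sInf_mem (Nonempty.image _ ?_)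
    obtain ⟨i⟩ := ‹Nonempty n›
    exact ⟨Pi.single i 1, by simp [unitSphere]⟩
  refine ⟨v, hv, ?_⟩
  have hzero := ((posSemidef_sub_rayleighInf_smul hB).dotProduct_mulVec_zero_iff v).mp (by
    simp only [star_trivial, sub_mulVec, dotProduct_sub, smul_mulVec, one_mulVec,
      dotProduct_smul, hmin]
    simp [show v ⬝ᵥ v = 1 from hv])
  rwa [sub_mulVec, smul_mulVec, one_mulVec, sub_eq_zero] at hzero

lemma dotProduct_mulVec_eq_of_mulVec_eq_smul {B : Matrix n n ℝ} {v : n → ℝ} {μ : ℝ}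
    (hv : v ∈ unitSphere n) (h : B *ᵥ v = μ • v) : v ⬝ᵥ B *ᵥ v = μ := by
  rw [h, dotProduct_smul, show v ⬝ᵥ v = 1 from hv, smul_eq_mul, mul_one]

lemma ContinuousOn.rayleighInf {X : Type*} [TopologicalSpace X] {Y : X → Matrix n n ℝ}
    {s : Set X} (hY : ContinuousOn Y s) : ContinuousOn (fun x => rayleighInf (Y x)) s := by
  rw [continuousOn_iff_continuous_domRestrict] at hY ⊢
  exact isCompact_unitSphere.continuous_sInf (f := fun x v => v ⬝ᵥ s.domRestrict Y x *ᵥ v)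
    (by fun_prop)

open MeasureTheory intervalIntegral in
lemma dotProduct_mulVec_integral {G : ℝ → Matrix n n ℝ} {a b : ℝ}
    (hG : ∀ i j, IntervalIntegrable (fun r => G r i j) volume a b) (v : n → ℝ) :
    v ⬝ᵥ (of fun i j => ∫ r in a..b, G r i j) *ᵥ v = ∫ r in a..b, v ⬝ᵥ G r *ᵥ v := by
  have hterm : ∀ i j, IntervalIntegrable (fun r => v i * (G r i j * v j)) volume a b :=
    fun i j => ((hG i j).mul_const _).const_mul _
  have hrow : ∀ i, IntervalIntegrable (fun r => ∑ j, v i * (G r i j * v j)) volume a b :=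
    fun i => by simpa only [Finset.sum_fn] using IntervalIntegrable.sum _ fun j _ => hterm i j
  simp only [dotProduct, mulVec, of_apply, Finset.mul_sum]
  rw [integral_finsetSum fun i _ => hrow i]
  refine Finset.sum_congr rfl fun i _ => ?_
  rw [integral_finsetSum fun j _ => hterm i j]
  refine Finset.sum_congr rfl fun j _ => ?_
  rw [intervalIntegral.integral_const_mul, intervalIntegral.integral_mul_const]

open MeasureTheory intervalIntegral in
lemma tendsto_slope_dotProduct_mulVec_of_eq_integral {Y G : ℝ → Matrix n n ℝ}
    {U : Matrix n n ℝ} {t T σ : ℝ} (hG : ContinuousOn G (Icc t T))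
    (hY : ∀ s ∈ Icc t T, ∀ i j, Y s i j = U i j + ∫ r in s..T, G r i j) (hσ : σ ∈ Ico t T)
    (v : n → ℝ) :
    Tendsto (slope (fun s => v ⬝ᵥ Y s *ᵥ v) σ) (𝓝[>] σ) (𝓝 (-(v ⬝ᵥ G σ *ᵥ v))) := by
  set g := fun r => v ⬝ᵥ G r *ᵥ v
  have hg : ContinuousOn g (Icc t T) := by fun_prop
  have hIcc : Icc t T ∈ 𝓝[>] σ := mem_of_superset (Ioc_mem_nhdsGT hσ.2)
    (Ioc_subset_Icc_self.trans (Icc_subset_Icc_left hσ.1))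
  have hquad : ∀ s ∈ Icc t T, v ⬝ᵥ Y s *ᵥ v = v ⬝ᵥ U *ᵥ v + ∫ r in s..T, g r := by
    intro s hs
    have hGij : ∀ i j, IntervalIntegrable (fun r => G r i j) volume s T := fun i j =>
      ((continuous_apply j).comp_continuousOn ((continuous_apply i).comp_continuousOn hG)).mono
        (uIcc_subset_Icc hs (right_mem_Icc.mpr (hs.1.trans hs.2))) |>.intervalIntegrable
    rw [← dotProduct_mulVec_integral hGij, ← dotProduct_add, ← add_mulVec]
    congr 2
    ext i j
    exact hY s hs i j
  have hderiv : HasDerivWithinAt (fun s => ∫ r in s..T, g r) (-g σ) (Ici σ) σ :=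
    integral_hasDerivWithinAt_left
      ((hg.mono (Icc_subset_Icc_left hσ.1)).intervalIntegrable_of_Icc hσ.2.le)
      ((hg.stronglyMeasurableAtFilter_nhdsWithin measurableSet_Icc σ).filter_mono
        (nhdsWithin_le_of_mem hIcc))
      ((hg.continuousWithinAt (Ico_subset_Icc_self hσ)).mono_of_mem_nhdsWithin hIcc)
  refine (hasDerivWithinAt_iff_tendsto_slope' (lt_irrefl σ)).mp ?_
  refine ((hderiv.const_add (v ⬝ᵥ U *ᵥ v)).mono Ioi_subset_Ici_self).congr_of_eventuallyEq ?_ ?_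
  · filter_upwards [hIcc] with s hs using hquad s hs
  · exact hquad σ (Ico_subset_Icc_self hσ)

theorem posSemidef_of_slope_at_eigenvector_le {Y : ℝ → Matrix n n ℝ} {t T C : ℝ}
    (hY : ContinuousOn Y (Icc t T)) (hsymm : ∀ s ∈ Icc t T, (Y s).IsSymm)
    (hT : (Y T).PosSemidef)
    (hslope : ∀ σ ∈ Ico t T, ∀ v ∈ unitSphere n, Y σ *ᵥ v = rayleighInf (Y σ) • v →
      ∀ r, C * |rayleighInf (Y σ)| < r →
        ∀ᶠ z in 𝓝[>] σ, slope (fun s => v ⬝ᵥ Y s *ᵥ v) σ z < r) :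
    ∀ s ∈ Icc t T, (Y s).PosSemidef := by
  intro s hs
  refine posSemidef_of_rayleighInf_nonneg (hsymm s hs) (not_lt.mp fun hneg => ?_)
  -- for empty `n` the unit sphere is empty, so `rayleighInf` is the junk value `sInf ∅ = 0`
  have : Nonempty n := by
    by_contra h
    rw [not_nonempty_iff] at h
    simp [rayleighInf, unitSphere] at hneg
  set m := fun z => rayleighInf (Y z)
  set B := fun z => m s * Real.exp (-(C + 1) * (z - s))
  have hB : ∀ z, HasDerivAt B (-(C + 1) * B z) z := fun z => by
    simpa [B, mul_comm, mul_left_comm] using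
      (((hasDerivAt_id z).sub_const s).const_mul (-(C + 1))).exp.const_mul (m s)
  have hBneg : ∀ z, B z < 0 := fun z => mul_neg_of_neg_of_pos hneg (Real.exp_pos _)
  have hmB := image_le_of_liminf_slope_right_lt_deriv_boundary' (f' := fun x => C * |m x|)
    ((ContinuousOn.rayleighInf hY).mono (Icc_subset_Icc_left hs.1)) ?_ (B := B)
    (by simp [B, m]) (fun z _ => (hB z).continuousAt.continuousWithinAt)
    (fun x _ => (hB x).hasDerivWithinAt) ?_ (right_mem_Icc.mpr hs.2)
  · linarith [rayleighInf_nonneg hT, hBneg T]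
  · intro x hx r hr
    have hx' : x ∈ Ico t T := ⟨hs.1.trans hx.1, hx.2⟩
    obtain ⟨v, hv, hYv⟩ := exists_mulVec_eq_rayleighInf_smul (hsymm x (Ico_subset_Icc_self hx'))
    refine Eventually.frequently ?_
    filter_upwards [hslope x hx' v hv hYv r hr, self_mem_nhdsWithin] with z hz hxz
    refine lt_of_le_of_lt ?_ hz
    rw [slope_def_field, slope_def_field, dotProduct_mulVec_eq_of_mulVec_eq_smul hv hYv]
    gcongr
    · exact sub_nonneg.mpr (le_of_lt hxz)
    · exact rayleighInf_le _ hv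
  · intro x _ hmx
    have hx : m x < 0 := (show m x = B x from hmx) ▸ hBneg x
    show C * |m x| < -(C + 1) * B x
    rw [← hmx, abs_of_neg hx]
    linarith

noncomputable def riccatiRhs (H A P Y : Matrix n n ℝ) : Matrix n n ℝ :=
  H + A * Y + Y * Aᵀ + Y * P * Y

lemma dotProduct_riccatiRhs_mulVec {H A P Y : Matrix n n ℝ} {v : n → ℝ} {μ : ℝ}
    (hY : Y.IsSymm) (hYv : Y *ᵥ v = μ • v) :
    v ⬝ᵥ riccatiRhs H A P Y *ᵥ v
      = v ⬝ᵥ H *ᵥ v + 2 * μ * (v ⬝ᵥ A *ᵥ v) + μ ^ 2 * (v ⬝ᵥ P *ᵥ v) := by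
  have hvY : v ᵥ* Y = μ • v := by rw [← mulVec_transpose, hY.eq, hYv]
  simp only [riccatiRhs, add_mulVec, dotProduct_add, ← mulVec_mulVec, hYv, mulVec_smul,
    dotProduct_smul, dotProduct_mulVec v Y, hvY, smul_dotProduct, dotProduct_transpose_mulVec,
    smul_eq_mul]
  ring

lemma neg_dotProduct_riccatiRhs_mulVec_le {H A P Y : Matrix n n ℝ} {v : n → ℝ} {μ c : ℝ}
    (hY : Y.IsSymm) (hYv : Y *ᵥ v = μ • v) (hH : H.PosSemidef) (hμ : |μ| ≤ c)
    (hA : |v ⬝ᵥ A *ᵥ v| ≤ c) (hP : |v ⬝ᵥ P *ᵥ v| ≤ c) :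
    -(v ⬝ᵥ riccatiRhs H A P Y *ᵥ v) ≤ (2 * c + c ^ 2) * |μ| := by
  have hH0 : 0 ≤ v ⬝ᵥ H *ᵥ v := by simpa using hH.dotProduct_mulVec_nonneg v
  have hμA : -(μ * (v ⬝ᵥ A *ᵥ v)) ≤ c * |μ| := by
    rw [mul_comm c]
    exact (neg_le_abs _).trans (abs_mul μ _ ▸ mul_le_mul_of_nonneg_left hA (abs_nonneg μ))
  have hμP : -(μ ^ 2 * (v ⬝ᵥ P *ᵥ v)) ≤ c ^ 2 * |μ| := by
    calc -(μ ^ 2 * (v ⬝ᵥ P *ᵥ v)) ≤ |μ| * |μ| * c := by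
          rw [← sq_abs, sq]
          exact (neg_le_abs _).trans (by rw [abs_mul, abs_mul, abs_abs]; gcongr)
      _ ≤ c * |μ| * c := by gcongr; exact (abs_nonneg μ).trans hμ
      _ = c ^ 2 * |μ| := by ring
  rw [dotProduct_riccatiRhs_mulVec hY hYv]
  linarith

end

theorem stmt11_general (N : ℕ) (t T : ℝ) (htT : t ≤ T)
    (Y A Hxx Hpp : ℝ → Matrix (Fin N) (Fin N) ℝ)
    (UT : Matrix (Fin N) (Fin N) ℝ)
    (hYcont : ∀ i j, ContinuousOn (fun s => Y s i j) (Set.Icc t T))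
    (hAcont : ∀ i j, ContinuousOn (fun s => A s i j) (Set.Icc t T))
    (hHxxcont : ∀ i j, ContinuousOn (fun s => Hxx s i j) (Set.Icc t T))
    (hHppcont : ∀ i j, ContinuousOn (fun s => Hpp s i j) (Set.Icc t T))
    (hbdd : ∃ M : ℝ, ∀ s ∈ Set.Icc t T, ∀ i j,
      |Y s i j| ≤ M ∧ |A s i j| ≤ M ∧ |Hxx s i j| ≤ M ∧ |Hpp s i j| ≤ M)
    (hYsym : ∀ s ∈ Set.Icc t T, (Y s).IsSymm)
    (hUT : UT.PosSemidef)
    (hHxx : ∀ s ∈ Set.Icc t T, (Hxx s).PosSemidef)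
    (heq : ∀ s ∈ Set.Icc t T, ∀ i j,
      Y s i j = UT i j +
        ∫ r in s..T, (Hxx r + A r * Y r + Y r * (A r)ᵀ + Y r * Hpp r * Y r) i j) :
    ∀ s ∈ Set.Icc t T, (Y s).PosSemidef := by
  obtain ⟨M, hM⟩ := hbdd
  have hmatrix : ∀ Z : ℝ → Matrix (Fin N) (Fin N) ℝ,
      (∀ i j, ContinuousOn (fun s => Z s i j) (Icc t T)) → ContinuousOn Z (Icc t T) :=
    fun Z hZ => continuousOn_pi.mpr fun i => continuousOn_pi.mpr (hZ i)
  have hY := hmatrix Y hYcont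
  have hF : ContinuousOn (fun r => riccatiRhs (Hxx r) (A r) (Hpp r) (Y r)) (Icc t T) := by
    have hAc := hmatrix A hAcont
    have hHxxc := hmatrix Hxx hHxxcont
    have hHppc := hmatrix Hpp hHppcont
    unfold riccatiRhs
    fun_prop
  have hYT : Y T = UT := by
    ext i j
    simpa using heq T (right_mem_Icc.mpr htT) i j
  set c : ℝ := N ^ 2 * M
  refine posSemidef_of_slope_at_eigenvector_le (C := 2 * c + c ^ 2) hY hYsym (hYT ▸ hUT)
    fun σ hσ v hv hYv r hr => ?_
  have hσ' : σ ∈ Icc t T := Ico_subset_Icc_self hσ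
  have hquad : ∀ B : Matrix (Fin N) (Fin N) ℝ, (∀ i j, |B i j| ≤ M) → |v ⬝ᵥ B *ᵥ v| ≤ c :=
    fun B hB => by simpa using abs_dotProduct_mulVec_le hv hB
  have hbound := neg_dotProduct_riccatiRhs_mulVec_le (hYsym σ hσ') hYv (hHxx σ hσ')
    (dotProduct_mulVec_eq_of_mulVec_eq_smul hv hYv ▸ hquad _ fun i j => (hM σ hσ' i j).1)
    (hquad _ fun i j => (hM σ hσ' i j).2.1) (hquad _ fun i j => (hM σ hσ' i j).2.2.2)
  exact (tendsto_slope_dotProduct_mulVec_of_eq_integral hF heq hσ v).eventually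
    (gt_mem_nhds (hbound.trans_lt hr))

/-- deterministic version, as allowed by the context: if a continuous
bounded symmetric-matrix-valued function `Y` on `[t,T]` satisfies (entrywise) the
backward matrix Riccati integral equation
`Y(s) = U_T + ∫_s^T (H^{xx}(r) + A(r)Y(r) + Y(r)A(r)ᵀ + Y(r)H^{pp}(r)Y(r)) dr`
with `U_T ⪰ 0`, `H^{xx}(r) ⪰ 0`, `H^{pp}(r) ⪯ 0` and bounded continuous coefficients,
then `Y(s) ⪰ 0` for all `s ∈ [t,T]`. -/
theorem stmt11 (N : ℕ) (t T : ℝ) (htT : t ≤ T)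
    (Y A Hxx Hpp : ℝ → Matrix (Fin N) (Fin N) ℝ)
    (UT : Matrix (Fin N) (Fin N) ℝ)
    (hYcont : ∀ i j, ContinuousOn (fun s => Y s i j) (Set.Icc t T))
    (hAcont : ∀ i j, ContinuousOn (fun s => A s i j) (Set.Icc t T))
    (hHxxcont : ∀ i j, ContinuousOn (fun s => Hxx s i j) (Set.Icc t T))
    (hHppcont : ∀ i j, ContinuousOn (fun s => Hpp s i j) (Set.Icc t T))
    (hbdd : ∃ M : ℝ, ∀ s ∈ Set.Icc t T, ∀ i j,
      |Y s i j| ≤ M ∧ |A s i j| ≤ M ∧ |Hxx s i j| ≤ M ∧ |Hpp s i j| ≤ M)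
    (hYsym : ∀ s ∈ Set.Icc t T, (Y s).IsSymm)
    (hUT : UT.PosSemidef)
    (hHxx : ∀ s ∈ Set.Icc t T, (Hxx s).PosSemidef)
    (hHpp : ∀ s ∈ Set.Icc t T, (-(Hpp s)).PosSemidef)
    (heq : ∀ s ∈ Set.Icc t T, ∀ i j,
      Y s i j = UT i j +
        ∫ r in s..T, (Hxx r + A r * Y r + Y r * (A r)ᵀ + Y r * Hpp r * Y r) i j) :
    ∀ s ∈ Set.Icc t T, (Y s).PosSemidef :=
  stmt11_general N t T htT Y A Hxx Hpp UT hYcont hAcont hHxxcont hHppcont hbdd hYsym hUT hHxx heq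
end

section
/- Let Y : [t,T] → ℝ^{N×N} be a bounded solution of the matrix equation Y(s) = U_T + ∫_s^T ( H^{xx}(r) + A(r)Y(r) + Y(r)A(r) + Y(r)H^{pp}(r)Y(r) ) dr, where U_T, H^{xx}(r), A(r), H^{pp}(r) are symmetric, U_T ≥ 0, H^{xx}(r) ≥ 0, H^{pp}(r) ≤ 0, Y(r) ≥ 0, and there is a constant c with αᵀU_Tα + ∫_t^T αᵀH^{xx}(r)α dr ≤ c/N and ‖A(r)‖ ≤ c for all unit vectors α and r ∈ [t,T]. Then sup_{s∈[t,T]} sup_{|α|=1} αᵀY(s)α ≤ (c/N)·e^{2c(T−t)}. -/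
/-!
Let `g r` be the largest value of `βᵀ Y(r) β` on the unit sphere. Testing the integral equation
against a unit vector `β`, the drift contributes `βᵀ(AY + YA)β = 2 (Aβ)ᵀ Y β ≤ 2 c g`, by the
Cauchy–Schwarz inequality for the semi-inner product `Y ⪰ 0`; the term `βᵀ Y H^{pp} Y β` is
nonpositive, and the `U_T` and `H^{xx}` contributions are at most `c/N`. Hence
`g u ≤ c/N + 2c ∫_u^T g`, and Grönwall's inequality gives `g u ≤ (c/N) e^{2c(T-u)}`. Grönwall is
run by Picard iteration from a uniform bound on `g`: the iterates are the Taylor partial sums of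
`(c/N) e^{2c(T-u)}` plus a remainder `M (2c(T-u))ⁿ/n!`.
-/

open Finset Set MeasureTheory
open scoped Matrix Nat

lemma integral_mul_pow_div_factorial (b T u : ℝ) (k : ℕ) :
    ∫ r in u..T, b * ((b * (T - r)) ^ k / k !) = (b * (T - u)) ^ (k + 1) / (k + 1)! := by
  have hpow : ∫ r in u..T, (T - r) ^ k = (T - u) ^ (k + 1) / (k + 1) := by
    simp [intervalIntegral.integral_comp_sub_left (fun x => x ^ k) T, integral_pow]
  calc ∫ r in u..T, b * ((b * (T - r)) ^ k / k !)
      = ∫ r in u..T, b ^ (k + 1) / k ! * (T - r) ^ k := by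
        congr 1; ext r; rw [mul_pow, pow_succ']; ring
    _ = (b * (T - u)) ^ (k + 1) / (k + 1)! := by
        rw [intervalIntegral.integral_const_mul, hpow, Nat.factorial_succ, mul_pow]
        push_cast
        field_simp

noncomputable def gronwallIterate (a b M T : ℝ) (n : ℕ) (r : ℝ) : ℝ :=
  a * ∑ k ∈ range n, (b * (T - r)) ^ k / k ! + M * ((b * (T - r)) ^ n / n !)

lemma continuous_gronwallIterate (a b M T : ℝ) (n : ℕ) :
    Continuous (gronwallIterate a b M T n) := by
  unfold gronwallIterate; fun_prop

lemma add_mul_integral_gronwallIterate (a b M T u : ℝ) (n : ℕ) :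
    a + b * ∫ r in u..T, gronwallIterate a b M T n r = gronwallIterate a b M T (n + 1) u := by
  simp only [gronwallIterate, ← intervalIntegral.integral_const_mul, mul_add, mul_sum,
    mul_left_comm b a, mul_left_comm b M]
  rw [intervalIntegral.integral_add, intervalIntegral.integral_finsetSum]
  · simp only [intervalIntegral.integral_const_mul a, intervalIntegral.integral_const_mul M,
      integral_mul_pow_div_factorial, sum_range_succ' _ n]
    simp only [pow_zero, Nat.factorial_zero, Nat.cast_one, div_one, mul_one]
    ring
  all_goals intros; exact Continuous.intervalIntegrable (by fun_prop) _ _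

lemma tendsto_gronwallIterate (a b M T u : ℝ) :
    Filter.Tendsto (fun n => gronwallIterate a b M T n u) Filter.atTop
      (nhds (a * Real.exp (b * (T - u)))) := by
  have hexp := (NormedSpace.expSeries_div_hasSum_exp (b * (T - u))).tendsto_sum_nat
  rw [← Real.exp_eq_exp_ℝ] at hexp
  simpa [gronwallIterate] using (hexp.const_mul a).add
    ((FloorSemiring.tendsto_pow_div_factorial_atTop (b * (T - u))).const_mul M)

/-- Only continuous majorants `E` are tested, so that `g` need not be measurable. -/
theorem le_mul_exp_of_le_add_mul_integral {g : ℝ → ℝ} {a b M t T : ℝ}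
    (hM : ∀ r ∈ Icc t T, g r ≤ M)
    (hg : ∀ u ∈ Icc t T, ∀ E : ℝ → ℝ, Continuous E → (∀ r ∈ Icc u T, g r ≤ E r) →
      g u ≤ a + b * ∫ r in u..T, E r) :
    ∀ u ∈ Icc t T, g u ≤ a * Real.exp (b * (T - u)) := by
  have hiter : ∀ n, ∀ u ∈ Icc t T, g u ≤ gronwallIterate a b M T n u := by
    intro n
    induction n with
    | zero => intro u hu; simpa [gronwallIterate] using hM u hu
    | succ n ih =>
      intro u hu
      rw [← add_mul_integral_gronwallIterate]
      exact hg u hu _ (continuous_gronwallIterate a b M T n) fun r hr =>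
        ih r ⟨hu.1.trans hr.1, hr.2⟩
  exact fun u hu => ge_of_tendsto' (tendsto_gronwallIterate a b M T u) fun n => hiter n u hu

lemma abs_le_one_of_sum_sq_eq_one {n : Type*} [Fintype n] {β : n → ℝ} (hβ : ∑ i, β i ^ 2 = 1)
    (i : n) : |β i| ≤ 1 := by
  rw [← abs_one, ← sq_le_sq, one_pow, ← hβ]
  exact single_le_sum (fun j _ => sq_nonneg (β j)) (Finset.mem_univ i)

namespace Matrix

variable {n : Type*} [Fintype n]

noncomputable def rayleighSup (Y : Matrix n n ℝ) : ℝ :=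
  sSup ((fun β => β ⬝ᵥ Y *ᵥ β) '' {β | ∑ i, β i ^ 2 = 1})

lemma dotProduct_mulVec_le_sum_abs (Y : Matrix n n ℝ) {β : n → ℝ} (hβ : ∑ i, β i ^ 2 = 1) :
    β ⬝ᵥ Y *ᵥ β ≤ ∑ i, ∑ j, |Y i j| := by
  have hβ1 := abs_le_one_of_sum_sq_eq_one hβ
  calc β ⬝ᵥ Y *ᵥ β = ∑ i, ∑ j, β i * Y i j * β j := by
        simp only [dotProduct, mulVec, mul_sum, mul_assoc]
    _ ≤ ∑ i, ∑ j, |Y i j| := by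
        gcongr with i _ j _
        calc β i * Y i j * β j ≤ |β i * Y i j * β j| := le_abs_self _
          _ = |β i| * |Y i j| * |β j| := by rw [abs_mul, abs_mul]
          _ ≤ 1 * |Y i j| * 1 := by gcongr <;> exact hβ1 _
          _ = |Y i j| := by ring

lemma bddAbove_rayleigh_image (Y : Matrix n n ℝ) :
    BddAbove ((fun β => β ⬝ᵥ Y *ᵥ β) '' {β | ∑ i, β i ^ 2 = 1}) :=
  ⟨_, forall_mem_image.2 fun _ hβ => dotProduct_mulVec_le_sum_abs Y hβ⟩

lemma dotProduct_mulVec_le_rayleighSup (Y : Matrix n n ℝ) {β : n → ℝ}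
    (hβ : ∑ i, β i ^ 2 = 1) : β ⬝ᵥ Y *ᵥ β ≤ rayleighSup Y :=
  le_csSup (bddAbove_rayleigh_image Y) (Set.mem_image_of_mem _ hβ)

lemma rayleighSup_le [Nonempty n] {Y : Matrix n n ℝ} {b : ℝ}
    (h : ∀ β : n → ℝ, ∑ i, β i ^ 2 = 1 → β ⬝ᵥ Y *ᵥ β ≤ b) : rayleighSup Y ≤ b := by
  classical
  have hunit : ∑ i, (Pi.single (Classical.arbitrary n) 1 : n → ℝ) i ^ 2 = 1 := by
    simp [Pi.single_apply]
  exact csSup_le ⟨_, Set.mem_image_of_mem _ hunit⟩ (forall_mem_image.2 h)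

lemma rayleighSup_le_sum_abs [Nonempty n] (Y : Matrix n n ℝ) :
    rayleighSup Y ≤ ∑ i, ∑ j, |Y i j| :=
  rayleighSup_le fun _ hβ => dotProduct_mulVec_le_sum_abs Y hβ

lemma PosSemidef.rayleighSup_nonneg {Y : Matrix n n ℝ} (hY : Y.PosSemidef) :
    0 ≤ rayleighSup Y :=
  Real.sSup_nonneg <| forall_mem_image.2 fun β _ => by
    simpa using hY.dotProduct_mulVec_nonneg β

lemma dotProduct_mulVec_le_rayleighSup_mul (Y : Matrix n n ℝ) (β : n → ℝ) :
    β ⬝ᵥ Y *ᵥ β ≤ rayleighSup Y * ∑ i, β i ^ 2 := by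
  rcases (sum_nonneg fun i _ => sq_nonneg (β i) : 0 ≤ ∑ i, β i ^ 2).eq_or_lt with h0 | hpos
  · have : β = 0 := funext fun i => pow_eq_zero_iff two_ne_zero |>.1 <|
      (sum_eq_zero_iff_of_nonneg fun j _ => sq_nonneg (β j)).1 h0.symm i (mem_univ i)
    simp [this]
  · set s := Real.sqrt (∑ i, β i ^ 2)
    have hs : 0 < s := Real.sqrt_pos.2 hpos
    have hs2 : s ^ 2 = ∑ i, β i ^ 2 := Real.sq_sqrt hpos.le
    have hunit : ∑ i, (s⁻¹ • β) i ^ 2 = 1 := by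
      simp only [Pi.smul_apply, smul_eq_mul, mul_pow, ← mul_sum, ← hs2]
      field_simp
    have := dotProduct_mulVec_le_rayleighSup Y hunit
    rw [mulVec_smul, dotProduct_smul, smul_dotProduct, smul_eq_mul, smul_eq_mul, ← mul_assoc,
      ← sq, inv_pow, hs2, inv_mul_le_iff₀ hpos] at this
    linarith

lemma PosSemidef.dotProduct_mulVec_le_rayleighSup_mul_sqrt {Y : Matrix n n ℝ}
    (hY : Y.PosSemidef) {β : n → ℝ} (hβ : ∑ i, β i ^ 2 = 1) (a : n → ℝ) :
    a ⬝ᵥ Y *ᵥ β ≤ rayleighSup Y * Real.sqrt (∑ i, a i ^ 2) := by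
  classical
  have hsymm : β ⬝ᵥ Y *ᵥ a = a ⬝ᵥ Y *ᵥ β := by
    rw [dotProduct_mulVec, ← mulVec_transpose, (isHermitian_iff_isSymm.1 hY.1).eq, dotProduct_comm]
  have hCS := (toBilin' Y).apply_mul_apply_le_of_forall_zero_le
    (fun x => by simpa [toBilin'_apply'] using hY.dotProduct_mulVec_nonneg x) a β
  simp only [toBilin'_apply', hsymm] at hCS
  have hg := hY.rayleighSup_nonneg
  have haa := dotProduct_mulVec_le_rayleighSup_mul Y a
  have hββ := dotProduct_mulVec_le_rayleighSup Y hβ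
  have hββ0 : 0 ≤ β ⬝ᵥ Y *ᵥ β := by simpa using hY.dotProduct_mulVec_nonneg β
  refine (le_abs_self _).trans (abs_le_of_sq_le_sq ?_ (by positivity))
  rw [mul_pow, Real.sq_sqrt (sum_nonneg fun i _ => sq_nonneg (a i))]
  calc (a ⬝ᵥ Y *ᵥ β) ^ 2 ≤ (a ⬝ᵥ Y *ᵥ a) * (β ⬝ᵥ Y *ᵥ β) := by rw [sq]; exact hCS
    _ ≤ (rayleighSup Y * ∑ i, a i ^ 2) * rayleighSup Y := by gcongr
    _ = rayleighSup Y ^ 2 * ∑ i, a i ^ 2 := by ring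

lemma riccati_dotProduct_mulVec_le {A Y H P : Matrix n n ℝ} {c : ℝ} (hA : A.IsSymm)
    (hY : Y.PosSemidef) (hP : (-P).PosSemidef) {β : n → ℝ} (hβ : ∑ i, β i ^ 2 = 1)
    (hAβ : Real.sqrt (∑ i, (A *ᵥ β) i ^ 2) ≤ c * Real.sqrt (∑ i, β i ^ 2)) :
    β ⬝ᵥ (H + A * Y + Y * A + Y * P * Y) *ᵥ β ≤ β ⬝ᵥ H *ᵥ β + 2 * c * rayleighSup Y := by
  rw [hβ, Real.sqrt_one, mul_one] at hAβ
  have hYsymm : Y.IsSymm := isHermitian_iff_isSymm.1 hY.1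
  have hAY : β ⬝ᵥ (A * Y) *ᵥ β = (A *ᵥ β) ⬝ᵥ Y *ᵥ β := by
    rw [← mulVec_mulVec, dotProduct_mulVec, ← mulVec_transpose, hA.eq, dotProduct_comm]
  have hYA : β ⬝ᵥ (Y * A) *ᵥ β = (A *ᵥ β) ⬝ᵥ Y *ᵥ β := by
    rw [← mulVec_mulVec, dotProduct_mulVec, ← mulVec_transpose, hYsymm.eq, dotProduct_comm]
  have hYPY : β ⬝ᵥ (Y * P * Y) *ᵥ β = (Y *ᵥ β) ⬝ᵥ P *ᵥ (Y *ᵥ β) := by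
    rw [← mulVec_mulVec, ← mulVec_mulVec, dotProduct_mulVec, ← mulVec_transpose, hYsymm.eq,
      dotProduct_comm]
  have hPneg : (Y *ᵥ β) ⬝ᵥ P *ᵥ (Y *ᵥ β) ≤ 0 := by
    simpa [neg_mulVec] using hP.dotProduct_mulVec_nonneg (Y *ᵥ β)
  have hcross : (A *ᵥ β) ⬝ᵥ Y *ᵥ β ≤ c * rayleighSup Y :=
    (hY.dotProduct_mulVec_le_rayleighSup_mul_sqrt hβ _).trans <| by
      rw [mul_comm]; exact mul_le_mul_of_nonneg_right hAβ hY.rayleighSup_nonneg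
  simp only [add_mulVec, dotProduct_add, hAY, hYA, hYPY]
  linarith

lemma dotProduct_mulVec_eq_sum (M : Matrix n n ℝ) (β : n → ℝ) :
    β ⬝ᵥ M *ᵥ β = ∑ i, ∑ j, β i * β j * M i j := by
  simp only [dotProduct, mulVec, mul_sum]
  exact sum_congr rfl fun i _ => sum_congr rfl fun j _ => by ring

lemma dotProduct_mulVec_eq_add_integral {Y U : Matrix n n ℝ} {G : ℝ → Matrix n n ℝ} {u T : ℝ}
    (hG : ∀ i j, IntervalIntegrable (fun r => G r i j) volume u T)
    (hY : ∀ i j, Y i j = U i j + ∫ r in u..T, G r i j) (β : n → ℝ) :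
    β ⬝ᵥ Y *ᵥ β = β ⬝ᵥ U *ᵥ β + ∫ r in u..T, β ⬝ᵥ G r *ᵥ β := by
  simp only [dotProduct_mulVec_eq_sum, hY, mul_add, sum_add_distrib]
  have hrow : ∀ i, IntervalIntegrable (fun r => ∑ j, β i * β j * G r i j)
      volume u T := fun i => by
    simpa only [Finset.sum_fn] using IntervalIntegrable.sum (f := fun j r => β i * β j * G r i j)
      univ fun j _ => (hG i j).const_mul _
  rw [intervalIntegral.integral_finsetSum fun i _ => hrow i]
  simp only [intervalIntegral.integral_finsetSum fun j _ => (hG _ j).const_mul _,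
    intervalIntegral.integral_const_mul]

lemma continuousOn_dotProduct_mulVec {G : ℝ → Matrix n n ℝ} {s : Set ℝ} (hG : ContinuousOn G s)
    (β : n → ℝ) : ContinuousOn (fun r => β ⬝ᵥ G r *ᵥ β) s :=
  (continuous_const.dotProduct (continuous_id.matrix_mulVec continuous_const)).comp_continuousOn hG

lemma continuousOn_riccati {Y A H P : ℝ → Matrix n n ℝ} {s : Set ℝ} (hY : ContinuousOn Y s)
    (hA : ContinuousOn A s) (hH : ContinuousOn H s) (hP : ContinuousOn P s) :
    ContinuousOn (fun r => H r + A r * Y r + Y r * A r + Y r * P r * Y r) s := by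
  rw [continuousOn_iff_continuous_domRestrict] at hY hA hH hP ⊢
  exact ((hH.add (hA.matrix_mul hY)).add (hY.matrix_mul hA)).add
    ((hY.matrix_mul hP).matrix_mul hY)

lemma rayleighSup_le_add_integral [Nonempty n] {Y U : Matrix n n ℝ} {G H : ℝ → Matrix n n ℝ}
    {E : ℝ → ℝ} {a t u T : ℝ} (htu : t ≤ u) (huT : u ≤ T)
    (hGc : ContinuousOn G (Icc u T)) (hHc : ContinuousOn H (Icc t T))
    (hEc : ContinuousOn E (Icc u T)) (hH : ∀ r ∈ Icc t u, (H r).PosSemidef)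
    (hU : ∀ β : n → ℝ, ∑ i, β i ^ 2 = 1 → β ⬝ᵥ U *ᵥ β + ∫ r in t..T, β ⬝ᵥ H r *ᵥ β ≤ a)
    (hG : ∀ r ∈ Icc u T, ∀ β : n → ℝ, ∑ i, β i ^ 2 = 1 →
      β ⬝ᵥ G r *ᵥ β ≤ β ⬝ᵥ H r *ᵥ β + E r)
    (hY : ∀ i j, Y i j = U i j + ∫ r in u..T, G r i j) :
    rayleighSup Y ≤ a + ∫ r in u..T, E r := by
  refine rayleighSup_le fun β hβ => ?_
  have hHβ := continuousOn_dotProduct_mulVec hHc β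
  have hHβ_tu : IntervalIntegrable (fun r => β ⬝ᵥ H r *ᵥ β) volume t u :=
    (hHβ.mono (Icc_subset_Icc_right huT)).intervalIntegrable_of_Icc htu
  have hHβ_uT : IntervalIntegrable (fun r => β ⬝ᵥ H r *ᵥ β) volume u T :=
    (hHβ.mono (Icc_subset_Icc_left htu)).intervalIntegrable_of_Icc huT
  have hEint : IntervalIntegrable E volume u T := hEc.intervalIntegrable_of_Icc huT
  have hH_tu : 0 ≤ ∫ r in t..u, β ⬝ᵥ H r *ᵥ β :=
    intervalIntegral.integral_nonneg htu fun r hr => by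
      simpa using (hH r hr).dotProduct_mulVec_nonneg β
  have hGentries : ∀ i j, IntervalIntegrable (fun r => G r i j) volume u T :=
    fun i j => ((continuous_apply_apply i j).comp_continuousOn hGc).intervalIntegrable_of_Icc huT
  calc β ⬝ᵥ Y *ᵥ β = β ⬝ᵥ U *ᵥ β + ∫ r in u..T, β ⬝ᵥ G r *ᵥ β :=
        dotProduct_mulVec_eq_add_integral hGentries hY β
    _ ≤ β ⬝ᵥ U *ᵥ β + ∫ r in u..T, (β ⬝ᵥ H r *ᵥ β + E r) := by
        gcongr
        exact intervalIntegral.integral_mono_on huT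
          ((continuousOn_dotProduct_mulVec hGc β).intervalIntegrable_of_Icc huT)
          (hHβ_uT.add hEint) fun r hr => hG r hr β hβ
    _ = β ⬝ᵥ U *ᵥ β + (∫ r in t..T, β ⬝ᵥ H r *ᵥ β) - (∫ r in t..u, β ⬝ᵥ H r *ᵥ β)
          + ∫ r in u..T, E r := by
        rw [intervalIntegral.integral_add hHβ_uT hEint,
          ← intervalIntegral.integral_add_adjacent_intervals hHβ_tu hHβ_uT]
        ring
    _ ≤ a + ∫ r in u..T, E r := by linarith [hU β hβ]

end Matrix

theorem stmt12_general (N : ℕ) (t T : ℝ) (c : ℝ) (hc : 0 ≤ c)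
    (Y A Hxx Hpp : ℝ → Matrix (Fin N) (Fin N) ℝ)
    (UT : Matrix (Fin N) (Fin N) ℝ)
    (hYcont : ∀ i j, ContinuousOn (fun s => Y s i j) (Set.Icc t T))
    (hcont : ∀ i j, ContinuousOn (fun s => A s i j) (Set.Icc t T) ∧
      ContinuousOn (fun s => Hxx s i j) (Set.Icc t T) ∧
      ContinuousOn (fun s => Hpp s i j) (Set.Icc t T))
    (hsym : ∀ s ∈ Set.Icc t T,
      (Y s).IsSymm ∧ (A s).IsSymm ∧ (Hxx s).IsSymm ∧ (Hpp s).IsSymm)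
    (hHxx : ∀ s ∈ Set.Icc t T, (Hxx s).PosSemidef)
    (hHpp : ∀ s ∈ Set.Icc t T, (-(Hpp s)).PosSemidef)
    (hY : ∀ s ∈ Set.Icc t T, (Y s).PosSemidef)
    (hsmall : ∀ α : Fin N → ℝ, (∑ i, α i ^ 2) = 1 →
      α ⬝ᵥ UT.mulVec α + ∫ r in t..T, α ⬝ᵥ (Hxx r).mulVec α ≤ c / N)
    (hAnorm : ∀ r ∈ Set.Icc t T, ∀ α : Fin N → ℝ,
      Real.sqrt (∑ i, ((A r).mulVec α i) ^ 2) ≤ c * Real.sqrt (∑ i, α i ^ 2))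
    (heq : ∀ s ∈ Set.Icc t T, ∀ i j,
      Y s i j = UT i j +
        ∫ r in s..T, (Hxx r + A r * Y r + Y r * A r + Y r * Hpp r * Y r) i j) :
    ∀ s ∈ Set.Icc t T, ∀ α : Fin N → ℝ, (∑ i, α i ^ 2) = 1 →
      α ⬝ᵥ (Y s).mulVec α ≤ (c / N) * Real.exp (2 * c * (T - t)) := by
  intro s hs α hα
  have : Nonempty (Fin N) := not_isEmpty_iff.1 fun _ => by simp at hα
  have entrywise : ∀ F : ℝ → Matrix (Fin N) (Fin N) ℝ,
      (∀ i j, ContinuousOn (fun s => F s i j) (Icc t T)) → ContinuousOn F (Icc t T) :=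
    fun F hF => continuousOn_pi.2 fun i => continuousOn_pi.2 (hF i)
  have hHc := entrywise Hxx fun i j => (hcont i j).2.1
  have hGc := Matrix.continuousOn_riccati (entrywise Y hYcont)
    (entrywise A fun i j => (hcont i j).1) hHc (entrywise Hpp fun i j => (hcont i j).2.2)
  obtain ⟨M, hM⟩ : BddAbove ((fun r => ∑ i, ∑ j, |Y r i j|) '' Icc t T) :=
    isCompact_Icc.bddAbove_image (by fun_prop)
  have hstep : ∀ u ∈ Icc t T, ∀ E : ℝ → ℝ, Continuous E →
      (∀ r ∈ Icc u T, (Y r).rayleighSup ≤ E r) →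
      (Y u).rayleighSup ≤ c / N + 2 * c * ∫ r in u..T, E r := by
    intro u hu E hE hYE
    have hsub : Icc u T ⊆ Icc t T := Icc_subset_Icc_left hu.1
    rw [← intervalIntegral.integral_const_mul]
    refine Matrix.rayleighSup_le_add_integral hu.1 hu.2 (hGc.mono hsub) hHc (by fun_prop)
      (fun r hr => hHxx r ⟨hr.1, hr.2.trans hu.2⟩) hsmall (fun r hr β hβ => ?_) (heq u hu)
    calc β ⬝ᵥ _ *ᵥ β ≤ β ⬝ᵥ Hxx r *ᵥ β + 2 * c * (Y r).rayleighSup :=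
          Matrix.riccati_dotProduct_mulVec_le (hsym r (hsub hr)).2.1 (hY r (hsub hr))
            (hHpp r (hsub hr)) hβ (hAnorm r (hsub hr) β)
      _ ≤ β ⬝ᵥ Hxx r *ᵥ β + 2 * c * E r := by gcongr; exact hYE r hr
  calc α ⬝ᵥ Y s *ᵥ α ≤ (Y s).rayleighSup := Matrix.dotProduct_mulVec_le_rayleighSup _ hα
    _ ≤ c / N * Real.exp (2 * c * (T - s)) :=
        le_mul_exp_of_le_add_mul_integral
          (fun r hr => (Matrix.rayleighSup_le_sum_abs _).trans (hM (mem_image_of_mem _ hr)))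
          hstep s hs
    _ ≤ c / N * Real.exp (2 * c * (T - t)) := by gcongr; exact hs.1

/-- for a bounded positive-semidefinite solution of the backward matrix
Riccati integral equation with `U_T ⪰ 0`, `H^{xx} ⪰ 0`, `H^{pp} ⪯ 0`, the a priori
bounds `αᵀU_Tα + ∫_t^T αᵀH^{xx}α ≤ c/N` (unit `α`) and `‖A(r)‖ ≤ c` imply
`αᵀY(s)α ≤ (c/N)·e^{2c(T−t)}` for all `s ∈ [t,T]` and unit vectors `α`. -/
theorem stmt12 (N : ℕ) (hN : 0 < N) (t T : ℝ) (htT : t ≤ T) (c : ℝ) (hc : 0 ≤ c)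
    (Y A Hxx Hpp : ℝ → Matrix (Fin N) (Fin N) ℝ)
    (UT : Matrix (Fin N) (Fin N) ℝ)
    (hYcont : ∀ i j, ContinuousOn (fun s => Y s i j) (Set.Icc t T))
    (hcont : ∀ i j, ContinuousOn (fun s => A s i j) (Set.Icc t T) ∧
      ContinuousOn (fun s => Hxx s i j) (Set.Icc t T) ∧
      ContinuousOn (fun s => Hpp s i j) (Set.Icc t T))
    (hbdd : ∃ M : ℝ, ∀ s ∈ Set.Icc t T, ∀ i j, |Y s i j| ≤ M)
    (hsym : ∀ s ∈ Set.Icc t T,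
      (Y s).IsSymm ∧ (A s).IsSymm ∧ (Hxx s).IsSymm ∧ (Hpp s).IsSymm)
    (hUTsym : UT.IsSymm)
    (hUT : UT.PosSemidef)
    (hHxx : ∀ s ∈ Set.Icc t T, (Hxx s).PosSemidef)
    (hHpp : ∀ s ∈ Set.Icc t T, (-(Hpp s)).PosSemidef)
    (hY : ∀ s ∈ Set.Icc t T, (Y s).PosSemidef)
    (hsmall : ∀ α : Fin N → ℝ, (∑ i, α i ^ 2) = 1 →
      α ⬝ᵥ UT.mulVec α + ∫ r in t..T, α ⬝ᵥ (Hxx r).mulVec α ≤ c / N)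
    (hAnorm : ∀ r ∈ Set.Icc t T, ∀ α : Fin N → ℝ,
      Real.sqrt (∑ i, ((A r).mulVec α i) ^ 2) ≤ c * Real.sqrt (∑ i, α i ^ 2))
    (heq : ∀ s ∈ Set.Icc t T, ∀ i j,
      Y s i j = UT i j +
        ∫ r in s..T, (Hxx r + A r * Y r + Y r * A r + Y r * Hpp r * Y r) i j) :
    ∀ s ∈ Set.Icc t T, ∀ α : Fin N → ℝ, (∑ i, α i ^ 2) = 1 →
      α ⬝ᵥ (Y s).mulVec α ≤ (c / N) * Real.exp (2 * c * (T - t)) :=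
  stmt12_general N t T c hc Y A Hxx Hpp UT hYcont hcont hsym hHxx hHpp hY hsmall hAnorm heq
end

section
/- Let x₁,…,x_N ∈ ℝ with N ≥ 2, and for k fixed let μ_N = (1/N)∑_{i=1}^N δ_{x_i} and μ_N^{−k} = (1/(N−1))∑_{i≠k} δ_{x_i}. Then W₁(μ_N, μ_N^{−k}) ≤ (2/(N−1))·(1/N)∑_{i=1}^N |x_i − x_k| ≤ (2/(N−1))·max_i |x_i − x_k|. -/
open MeasureTheory
open scoped BigOperators

/-- Empirical measure `(1/|s|)∑_{i ∈ s} δ_{f(i)}` over a finite index set `s`. -/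
noncomputable def empMeasureOn {α ι : Type*} [MeasurableSpace α] (s : Finset ι)
    (f : ι → α) : Measure α :=
  (s.card : ENNReal)⁻¹ • ∑ i ∈ s, Measure.dirac (f i)

/-- The `1`-Wasserstein cost, defined as the infimum of the transport cost over
all couplings. -/
noncomputable def W1 {E : Type*} [MeasurableSpace E] [PseudoMetricSpace E]
    (μ ν : Measure E) : ℝ :=
  sInf {c : ℝ | ∃ γ : Measure (E × E),
    γ.map Prod.fst = μ ∧ γ.map Prod.snd = ν ∧ c = ∫ z, dist z.1 z.2 ∂γ}

/-!
Couple `μ_N` with `μ_N^{-k}` by leaving the mass `1/N` of every atom `x_i`, `i ≠ k`, in place and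
spreading the mass `1/N` of `x_k` evenly over the remaining `N - 1` atoms. Only mass `1/N` moves,
so the transport cost is `(1/N) · (1/(N-1)) ∑_{i ≠ k} |x_i - x_k|`, half the stated bound.
-/

open Finset
open scoped ENNReal

variable {E : Type*} [MeasurableSpace E]

theorem W1_le_integral_dist [PseudoMetricSpace E] {μ ν : Measure E} (γ : Measure (E × E))
    (hfst : γ.map Prod.fst = μ) (hsnd : γ.map Prod.snd = ν) :
    W1 μ ν ≤ ∫ z, dist z.1 z.2 ∂γ :=
  csInf_le ⟨0, by rintro _ ⟨γ', -, -, rfl⟩; exact integral_nonneg fun _ ↦ dist_nonneg⟩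
    ⟨γ, hfst, hsnd, rfl⟩

section LeaveOneOut

variable {ι : Type*} [DecidableEq ι] (s : Finset ι) (f : ι → E) (k : ι)

/-- With `m = #(s.erase k)`, each `f i`, `i ≠ k`, keeps its mass `1/(m+1)` and receives mass
`1/((m+1) m)` from `f k`. -/
noncomputable def leaveOneOutCoupling : Measure (E × E) :=
  ((#s : ℝ≥0∞) * #(s.erase k))⁻¹ •
    ∑ i ∈ s.erase k, ((#(s.erase k) : ℝ≥0∞) • Measure.dirac (f i, f i) + Measure.dirac (f k, f i))

variable {s k}

theorem map_fst_leaveOneOutCoupling (hk : k ∈ s) (hs : (s.erase k).Nonempty) :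
    (leaveOneOutCoupling s f k).map Prod.fst = empMeasureOn s f := by
  have hm : (#(s.erase k) : ℝ≥0∞) ≠ 0 := by simpa using hs.ne_empty
  have hweight : ((#s : ℝ≥0∞) * #(s.erase k))⁻¹ * #(s.erase k) = (#s : ℝ≥0∞)⁻¹ := by
    rw [ENNReal.mul_inv (by simp) (by simp), mul_assoc,
      ENNReal.inv_mul_cancel hm (ENNReal.natCast_ne_top _), mul_one]
  simp only [leaveOneOutCoupling, empMeasureOn, Measure.map_smul,
    Measure.map_finset_sum measurable_fst.aemeasurable, Measure.map_add _ _ measurable_fst,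
    Measure.map_dirac' measurable_fst, sum_add_distrib, sum_const, ← Nat.cast_smul_eq_nsmul ℝ≥0∞,
    ← smul_sum, ← smul_add, smul_smul, hweight]
  rw [← sum_erase_add _ _ hk]

theorem map_snd_leaveOneOutCoupling (hk : k ∈ s) :
    (leaveOneOutCoupling s f k).map Prod.snd = empMeasureOn (s.erase k) f := by
  have hweight : ((#s : ℝ≥0∞) * #(s.erase k))⁻¹ * #(s.erase k) + ((#s : ℝ≥0∞) * #(s.erase k))⁻¹ =
      (#(s.erase k) : ℝ≥0∞)⁻¹ := by
    rw [← mul_add_one, ← Nat.cast_add_one, card_erase_add_one hk,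
      ENNReal.mul_inv (by simp) (by simp), mul_comm, ← mul_assoc,
      ENNReal.mul_inv_cancel (by simpa using ne_empty_of_mem hk) (by simp), one_mul]
  simp only [leaveOneOutCoupling, empMeasureOn, Measure.map_smul,
    Measure.map_finset_sum measurable_snd.aemeasurable, Measure.map_add _ _ measurable_snd,
    Measure.map_dirac' measurable_snd]
  rw [sum_add_distrib, ← smul_sum, smul_add, smul_smul, ← add_smul, hweight]

theorem integral_dist_leaveOneOutCoupling [PseudoMetricSpace E] [MeasurableSingletonClass E] :
    ∫ z, dist z.1 z.2 ∂(leaveOneOutCoupling s f k) =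
      ((#s : ℝ) * #(s.erase k))⁻¹ * ∑ i ∈ s.erase k, dist (f k) (f i) := by
  have hint (a : E × E) : Integrable (fun z : E × E ↦ dist z.1 z.2) (Measure.dirac a) :=
    integrable_dirac (by simp)
  rw [leaveOneOutCoupling, integral_smul_measure, integral_finsetSum_measure
    fun i _ ↦ ((hint _).smul_measure (ENNReal.natCast_ne_top _)).add_measure (hint _)]
  simp [integral_add_measure ((hint _).smul_measure (ENNReal.natCast_ne_top _)) (hint _),
    integral_dirac]

theorem W1_empMeasureOn_erase_le [PseudoMetricSpace E] [MeasurableSingletonClass E] (hk : k ∈ s)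
    (hs : (s.erase k).Nonempty) :
    W1 (empMeasureOn s f) (empMeasureOn (s.erase k) f) ≤
      ((#s : ℝ) * #(s.erase k))⁻¹ * ∑ i ∈ s.erase k, dist (f k) (f i) :=
  (W1_le_integral_dist _ (map_fst_leaveOneOutCoupling f hk hs)
    (map_snd_leaveOneOutCoupling f hk)).trans_eq (integral_dist_leaveOneOutCoupling f)

end LeaveOneOut

/-- leave-one-out estimate for empirical measures:
`W₁(μ_N, μ_N^{−k}) ≤ (2/(N−1))·(1/N)∑_i |x_i − x_k|`, and the latter is at most
`(2/(N−1))·M` for any bound `M ≥ |x_i − x_k|` for all `i`. -/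
theorem stmt14 (N : ℕ) (hN : 2 ≤ N) (x : Fin N → ℝ) (k : Fin N) :
    W1 (empMeasureOn Finset.univ x) (empMeasureOn (Finset.univ.erase k) x) ≤
      (2 / ((N : ℝ) - 1)) * ((1 / N) * ∑ i, |x i - x k|) ∧
    ∀ M : ℝ, (∀ i, |x i - x k| ≤ M) →
      (2 / ((N : ℝ) - 1)) * ((1 / N) * ∑ i, |x i - x k|) ≤ (2 / ((N : ℝ) - 1)) * M := by
  have hN' : (2 : ℝ) ≤ N := by exact_mod_cast hN
  have hcard : ((#(univ.erase k) : ℕ) : ℝ) = N - 1 := by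
    rw [card_erase_of_mem (mem_univ k), card_univ, Fintype.card_fin, Nat.cast_pred (by omega)]
  have hdist : ∑ i ∈ univ.erase k, dist (x k) (x i) = ∑ i, |x i - x k| := by
    rw [← sum_erase_add univ (fun i ↦ |x i - x k|) (mem_univ k), sub_self, abs_zero, add_zero]
    exact sum_congr rfl fun i _ ↦ abs_sub_comm _ _
  have hS : 0 ≤ ∑ i, |x i - x k| := sum_nonneg fun i _ ↦ abs_nonneg _
  have hc : 0 ≤ ((N : ℝ) * (N - 1))⁻¹ := inv_nonneg.2 (mul_nonneg (by linarith) (by linarith))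
  refine ⟨(W1_empMeasureOn_erase_le x (mem_univ k) ?_).trans ?_, fun M hM ↦ ?_⟩
  · rw [← card_pos, card_erase_of_mem (mem_univ k), card_univ, Fintype.card_fin]; omega
  · rw [card_univ, Fintype.card_fin, hcard, hdist]
    calc ((N : ℝ) * (N - 1))⁻¹ * ∑ i, |x i - x k|
        ≤ 2 * ((N : ℝ) * (N - 1))⁻¹ * ∑ i, |x i - x k| :=
          mul_le_mul_of_nonneg_right (le_mul_of_one_le_left hc one_le_two) hS
      _ = 2 / ((N : ℝ) - 1) * (1 / N * ∑ i, |x i - x k|) := by rw [mul_inv]; ring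
  · have hmean : ∑ i, |x i - x k| ≤ N * M := by
      simpa using sum_le_card_nsmul univ _ M fun i _ ↦ hM i
    refine mul_le_mul_of_nonneg_left ?_ (div_nonneg zero_le_two (by linarith))
    rwa [one_div, inv_mul_le_iff₀ (by positivity)]
end
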